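/- arXiv:1112.6283 — 3 statements merged into one kernel-verified Lean document; each statement's English description precedes it below -/
import Mathlib

section
/- Let W be a finite subgroup of GL(V) for V a finite-dimensional real vector space, let r ∈ W be a reflection, and let e be a nonzero vector spanning the image of r - id. Let W₀ = {w ∈ W | w(e) = e} be the stabilizer of e in W, and let C(r) be the centralizer of r in W. Then W₀ and the subgroup ⟨r⟩ generated by r are both normal subgroups of C(r), W₀ ∩ ⟨r⟩ is trivial, W₀ · ⟨r⟩ = C(r), and consequently C(r) is isomorphic to the direct product W₀ × (ℤ/2ℤ). -/
open scoped Pointwise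

/-- Let `W` be a finite subgroup of `GL(V)`, `r ∈ W` a reflection and `e` a nonzero vector
spanning the image of `r - id`.  Then the stabilizer `W₀` of `e` in `W` and `⟨r⟩` are both
normal in the centralizer `C(r)` of `r` in `W`, they intersect trivially, their product is
`C(r)`, and `C(r) ≅ W₀ × ℤ/2ℤ`. -/
theorem centralizer_of_reflection_structure
    (V : Type*) [AddCommGroup V] [Module ℝ V] [FiniteDimensional ℝ V]
    (W : Subgroup (V ≃ₗ[ℝ] V)) (hWfin : Finite W)
    (r : V ≃ₗ[ℝ] V) (hrW : r ∈ W) (hr2 : r ^ 2 = 1) (hr1 : r ≠ 1)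
    (hrrank : LinearMap.rank ((r : V →ₗ[ℝ] V) - LinearMap.id) = 1)
    (e : V) (he : e ≠ 0)
    (hespan : LinearMap.range ((r : V →ₗ[ℝ] V) - LinearMap.id) = Submodule.span ℝ {e})
    (W₀ C : Subgroup (V ≃ₗ[ℝ] V))
    (hW₀ : ∀ w, w ∈ W₀ ↔ w ∈ W ∧ w e = e)
    (hC : ∀ w, w ∈ C ↔ w ∈ W ∧ w * r = r * w) :
    W₀ ≤ C ∧ Subgroup.zpowers r ≤ C ∧
    (W₀.subgroupOf C).Normal ∧ ((Subgroup.zpowers r).subgroupOf C).Normal ∧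
    W₀ ⊓ Subgroup.zpowers r = ⊥ ∧
    (W₀ : Set (V ≃ₗ[ℝ] V)) * (Subgroup.zpowers r : Set (V ≃ₗ[ℝ] V)) = (C : Set (V ≃ₗ[ℝ] V)) ∧
    Nonempty (C ≃* W₀ × Multiplicative (ZMod 2)) := by
  have mul_apply : ∀ (a b : V ≃ₗ[ℝ] V) (x : V), (a * b) x = a (b x) := fun _ _ _ => rfl
  have one_apply : ∀ x : V, (1 : V ≃ₗ[ℝ] V) x = x := fun _ => rfl
  -- r is an involution
  have hrr : ∀ x : V, r (r x) = x := by
    intro x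
    have h : (r * r) x = (1 : V ≃ₗ[ℝ] V) x := by rw [← pow_two, hr2]
    rw [mul_apply, one_apply] at h
    exact h
  -- e is in the range of r - 1
  have hee : e ∈ LinearMap.range ((r : V →ₗ[ℝ] V) - LinearMap.id) := by
    rw [hespan]; exact Submodule.mem_span_singleton_self e
  obtain ⟨v₀, hv₀⟩ := hee
  have hv₀' : r v₀ - v₀ = e := by simpa using hv₀
  have hre : r e = -e := by
    calc r e = r (r v₀ - v₀) := by rw [hv₀']
    _ = v₀ - r v₀ := by rw [map_sub, hrr]
    _ = -e := by rw [← hv₀', neg_sub]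
  -- r v = v + a • e for some a
  have hrform : ∀ v : V, ∃ a : ℝ, r v = v + a • e := by
    intro v
    have h : r v - v ∈ Submodule.span ℝ {e} := by
      rw [← hespan]; exact ⟨v, by simp⟩
    obtain ⟨a, ha⟩ := Submodule.mem_span_singleton.mp h
    exact ⟨a, by rw [ha]; abel⟩
  -- elements of W fixing e commute with r
  have keyB : ∀ w : V ≃ₗ[ℝ] V, w ∈ W → w e = e → w * r = r * w := by
    intro w hw hwe
    have hwinv : w⁻¹ e = e := by
      have : w (w⁻¹ e) = w e := by
        rw [← mul_apply, mul_inv_cancel, one_apply, hwe]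
      exact w.injective this
    set s : V ≃ₗ[ℝ] V := w * r * w⁻¹ with hs
    have hse : s e = -e := by
      simp only [hs, mul_apply, hwinv, hre, map_neg, hwe]
    have hsform : ∀ v : V, ∃ a : ℝ, s v = v + a • e := by
      intro v
      obtain ⟨a, ha⟩ := hrform (w⁻¹ v)
      refine ⟨a, ?_⟩
      simp only [hs, mul_apply, ha, map_add, map_smul, hwe]
      rw [← mul_apply w w⁻¹, mul_inv_cancel, one_apply]
    set t : V ≃ₗ[ℝ] V := s * r with ht
    have hte : t e = e := by
      rw [ht, mul_apply, hre, map_neg, hse, neg_neg]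
    have htform : ∀ v : V, ∃ a : ℝ, t v = v + a • e := by
      intro v
      obtain ⟨a, ha⟩ := hrform v
      obtain ⟨b, hb⟩ := hsform v
      refine ⟨b - a, ?_⟩
      rw [ht, mul_apply, ha, map_add, map_smul, hse, hb, sub_smul]
      module
    -- t^n v = v + n • (t v - v)
    have hfix : ∀ v : V, t v - v = 0 → t v = v := fun v h => by
      rw [sub_eq_zero] at h; exact h
    have htsq : ∀ v : V, t (t v - v) = t v - v := by
      intro v
      obtain ⟨a, ha⟩ := htform v
      have h : t v - v = a • e := by rw [ha]; abel
      rw [h, map_smul, hte]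
    have hpow : ∀ (n : ℕ) (v : V), (t ^ n) v = v + (n : ℝ) • (t v - v) := by
      intro n
      induction n with
      | zero => intro v; simp [one_apply]
      | succ k ih =>
        intro v
        rw [pow_succ, mul_apply, ih (t v)]
        have h1 : t (t v) - t v = t v - v := by
          have := htsq v
          rw [map_sub] at this
          linear_combination (norm := module) this
        rw [h1]
        push_cast
        obtain ⟨a, ha⟩ := htform v
        rw [ha]
        module
    -- t has finite order
    have htW : t ∈ W := W.mul_mem (W.mul_mem (W.mul_mem hw hrW) (W.inv_mem hw)) hrW
    set T : W := ⟨t, htW⟩ with hT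
    have hn1 : T ^ (orderOf T) = 1 := pow_orderOf_eq_one T
    have hnpos : 0 < orderOf T := orderOf_pos T
    have htn : t ^ (orderOf T) = 1 := by
      have := congrArg (Subtype.val) hn1
      simpa [hT] using this
    have htone : ∀ v : V, t v = v := by
      intro v
      have h := hpow (orderOf T) v
      rw [htn, one_apply] at h
      have h2 : ((orderOf T : ℝ)) • (t v - v) = 0 := by
        linear_combination (norm := module) h.symm
      rcases smul_eq_zero.mp h2 with h3 | h3
      · exact absurd (Nat.cast_eq_zero.mp h3) hnpos.ne'
      · exact hfix v h3
    -- conclude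
    ext u
    have h := htone (r (w u))
    rw [ht, hs] at h
    simp only [mul_apply] at h ⊢
    rw [hrr] at h
    rw [← mul_apply w⁻¹ w, inv_mul_cancel, one_apply] at h
    exact h
  -- elements commuting with r send e to ± e
  have keyC : ∀ w : V ≃ₗ[ℝ] V, w ∈ W → w * r = r * w → w e = e ∨ w e = -e := by
    intro w hw hcomm
    have h1 : w e ∈ Submodule.span ℝ {e} := by
      rw [← hespan]
      refine ⟨w v₀, ?_⟩
      have hc : w (r v₀) = r (w v₀) := by
        rw [← mul_apply w r, hcomm, mul_apply]
      simp only [LinearMap.sub_apply, LinearEquiv.coe_coe, LinearMap.id_apply]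
      rw [← hc, ← map_sub, hv₀']
    obtain ⟨a, ha⟩ := Submodule.mem_span_singleton.mp h1
    have hwk : ∀ k : ℕ, (w ^ k) e = a ^ k • e := by
      intro k
      induction k with
      | zero => simp [one_apply]
      | succ m ih =>
        rw [pow_succ, mul_apply, ← ha, map_smul, ih, smul_smul, pow_succ, mul_comm]
    set Wel : W := ⟨w, hw⟩ with hWel
    have hnpos : 0 < orderOf Wel := orderOf_pos Wel
    have hwn : w ^ (orderOf Wel) = 1 := by
      have := congrArg (Subtype.val) (pow_orderOf_eq_one Wel)
      simpa [hWel] using this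
    have han : a ^ (orderOf Wel) = 1 := by
      have h := hwk (orderOf Wel)
      rw [hwn, one_apply] at h
      have h2 : (a ^ (orderOf Wel) - 1) • e = 0 := by
        rw [sub_smul, one_smul, ← h]; abel
      rcases smul_eq_zero.mp h2 with h3 | h3
      · linarith [sub_eq_zero.mp h3]
      · exact absurd h3 he
    rcases (pow_eq_one_iff_of_ne_zero hnpos.ne').mp han with h | h
    · left; rw [← ha, h, one_smul]
    · right; rw [← ha, h.1, neg_smul, one_smul]
  -- the six statements
  have hW0C : W₀ ≤ C := by
    intro w hw
    obtain ⟨hwW, hwe⟩ := (hW₀ w).mp hw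
    exact (hC w).mpr ⟨hwW, keyB w hwW hwe⟩
  have hrC : r ∈ C := (hC r).mpr ⟨hrW, rfl⟩
  have hzC : Subgroup.zpowers r ≤ C := Subgroup.zpowers_le.mpr hrC
  -- sign of an element of C, in convenient form
  have hsign : ∀ g : V ≃ₗ[ℝ] V, g ∈ C → ∃ ε : ℝ, ε * ε = 1 ∧ g e = ε • e ∧ g⁻¹ e = ε • e := by
    intro g hg
    obtain ⟨hgW, hgc⟩ := (hC g).mp hg
    have key : ∀ ε : ℝ, ε * ε = 1 → g e = ε • e → g⁻¹ e = ε • e := by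
      intro ε hε hge
      have : g (ε • e) = g (g⁻¹ e) := by
        rw [map_smul, hge, smul_smul, hε, one_smul, ← mul_apply,
          mul_inv_cancel, one_apply]
      exact (g.injective this).symm
    rcases keyC g hgW hgc with h | h
    · exact ⟨1, by norm_num, by simpa using h, key 1 (by norm_num) (by simpa using h)⟩
    · refine ⟨-1, by norm_num, ?_, key (-1) (by norm_num) ?_⟩ <;> simpa using h
  have hreneq : r e ≠ e := by
    rw [hre]
    intro hcontra
    apply he
    have h2 : e + e = 0 := by
      nth_rewrite 1 [← neg_neg e]
      rw [hcontra]; abel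
    have : (2 : ℝ) • e = 0 := by rw [two_smul]; exact h2
    rcases smul_eq_zero.mp this with h | h
    · norm_num at h
    · exact h
  -- normality of W₀ in C
  have hnorm₀ : (W₀.subgroupOf C).Normal := by
    constructor
    intro n hn g
    rw [Subgroup.mem_subgroupOf] at hn ⊢
    obtain ⟨hnW, hne⟩ := (hW₀ _).mp hn
    obtain ⟨ε, hε, hge, hgie⟩ := hsign (g : V ≃ₗ[ℝ] V) g.2
    refine (hW₀ _).mpr ⟨?_, ?_⟩
    · have hgW := ((hC _).mp g.2).1
      exact W.mul_mem (W.mul_mem hgW hnW) (W.inv_mem hgW)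
    · push_cast
      rw [mul_apply, mul_apply, hgie, map_smul, hne, map_smul, hge, smul_smul, hε, one_smul]
  -- normality of zpowers r in C
  have hnormz : ((Subgroup.zpowers r).subgroupOf C).Normal := by
    constructor
    intro n hn g
    rw [Subgroup.mem_subgroupOf] at hn ⊢
    obtain ⟨k, hk⟩ := hn
    have hgc : Commute (g : V ≃ₗ[ℝ] V) r := ((hC _).mp g.2).2
    have hcn : (g : V ≃ₗ[ℝ] V) * (n : V ≃ₗ[ℝ] V) * (g : V ≃ₗ[ℝ] V)⁻¹ = (n : V ≃ₗ[ℝ] V) := by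
      rw [← hk, (hgc.zpow_right k).eq, mul_assoc, mul_inv_cancel, mul_one]
    push_cast
    rw [hcn, ← hk]
    exact Subgroup.zpow_mem_zpowers r k
  -- zpowers r = {1, r}
  have hzpow : ∀ x : V ≃ₗ[ℝ] V, x ∈ Subgroup.zpowers r → x = 1 ∨ x = r := by
    intro x hx
    obtain ⟨k, hk⟩ := Subgroup.mem_zpowers_iff.mp hx
    have hr2' : r ^ (2 : ℤ) = 1 := by
      rw [show (2 : ℤ) = ((2 : ℕ) : ℤ) by norm_num, zpow_natCast, hr2]
    rcases Int.even_or_odd k with ⟨m, hm⟩ | ⟨m, hm⟩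
    · left
      rw [← hk, hm, show m + m = 2 * m by ring, zpow_mul, hr2', one_zpow]
    · right
      rw [← hk, hm, zpow_add, zpow_mul, hr2', one_zpow, one_mul, zpow_one]
  have hdisj : W₀ ⊓ Subgroup.zpowers r = ⊥ := by
    rw [eq_bot_iff]
    intro x hx
    rcases hzpow x hx.2 with h | h
    · simpa using h
    · exfalso
      exact hreneq (h ▸ ((hW₀ x).mp hx.1).2)
  -- product
  have hprodmem : ∀ c : V ≃ₗ[ℝ] V, c ∈ C →
      (c e = e ∧ c ∈ W₀) ∨ (c e = -e ∧ c * r ∈ W₀) := by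
    intro c hc
    obtain ⟨hcW, hcc⟩ := (hC c).mp hc
    rcases keyC c hcW hcc with h | h
    · exact Or.inl ⟨h, (hW₀ c).mpr ⟨hcW, h⟩⟩
    · refine Or.inr ⟨h, (hW₀ _).mpr ⟨W.mul_mem hcW hrW, ?_⟩⟩
      rw [mul_apply, hre, map_neg, h, neg_neg]
  have hprod : (W₀ : Set (V ≃ₗ[ℝ] V)) * (Subgroup.zpowers r : Set (V ≃ₗ[ℝ] V))
      = (C : Set (V ≃ₗ[ℝ] V)) := by
    ext x
    constructor
    · rintro ⟨a, ha, b, hb, rfl⟩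
      exact C.mul_mem (hW0C ha) (hzC hb)
    · intro hx
      rcases hprodmem x hx with ⟨_, hxW₀⟩ | ⟨_, hxrW₀⟩
      · exact ⟨x, hxW₀, 1, Subgroup.one_mem _, mul_one x⟩
      · refine ⟨x * r, hxrW₀, r, Subgroup.mem_zpowers r, ?_⟩
        show (x * r) * r = x
        rw [mul_assoc, ← pow_two, hr2, mul_one]
  refine ⟨hW0C, hzC, hnorm₀, hnormz, hdisj, hprod, ?_⟩
  -- the isomorphism
  have horder : orderOf r = 2 := orderOf_eq_prime hr2 hr1
  have hmem : ∀ (p : W₀ × Multiplicative (ZMod 2)),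
      (p.1 : V ≃ₗ[ℝ] V) * r ^ (Multiplicative.toAdd p.2).val ∈ C :=
    fun p => C.mul_mem (hW0C p.1.2) (pow_mem hrC _)
  let F : W₀ × Multiplicative (ZMod 2) →* C :=
    MonoidHom.mk' (fun p => ⟨(p.1 : V ≃ₗ[ℝ] V) * r ^ (Multiplicative.toAdd p.2).val, hmem p⟩)
      (by
        rintro ⟨⟨w₁, hw₁⟩, x₁⟩ ⟨⟨w₂, hw₂⟩, x₂⟩
        ext
        simp only [Prod.mk_mul_mk, MulMemClass.mk_mul_mk]
        have hcw₂ : Commute r w₂ :=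
          (((hC w₂).mp (hW0C hw₂)).2).symm
        have hmod : (Multiplicative.toAdd (x₁ * x₂)).val
            ≡ (Multiplicative.toAdd x₁).val + (Multiplicative.toAdd x₂).val [MOD 2] := by
          show (Multiplicative.toAdd (x₁ * x₂)).val % 2
            = ((Multiplicative.toAdd x₁).val + (Multiplicative.toAdd x₂).val) % 2
          rw [toAdd_mul, ZMod.val_add]
          omega
        have hpow2 : r ^ (Multiplicative.toAdd (x₁ * x₂)).val
            = r ^ ((Multiplicative.toAdd x₁).val + (Multiplicative.toAdd x₂).val) := by
          rw [pow_eq_pow_iff_modEq, horder]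
          exact hmod
        rw [hpow2, pow_add,
          (hcw₂.symm.pow_right ((Multiplicative.toAdd x₁).val)).mul_mul_mul_comm])
  have hFinj : Function.Injective F := by
    rw [injective_iff_map_eq_one]
    rintro ⟨⟨w, hw⟩, x⟩ hFp
    have h1 : w * r ^ (Multiplicative.toAdd x).val = 1 := congrArg Subtype.val hFp
    have hxval : (Multiplicative.toAdd x).val = 0 ∨ (Multiplicative.toAdd x).val = 1 := by
      have := ZMod.val_lt (Multiplicative.toAdd x)
      omega
    rcases hxval with h | h
    · rw [h, pow_zero, mul_one] at h1
      have hx : x = 1 := by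
        have : (Multiplicative.toAdd x) = 0 := by
          rwa [← ZMod.val_eq_zero]
        simpa using this
      simp [hx, Prod.ext_iff, h1]
    · exfalso
      rw [h, pow_one] at h1
      have hrinv : r⁻¹ = r := inv_eq_of_mul_eq_one_right (by rw [← pow_two, hr2])
      have hw' : w = r := by rw [mul_eq_one_iff_eq_inv.mp h1, hrinv]
      exact hreneq (hw' ▸ ((hW₀ w).mp hw).2)
  have hFsurj : Function.Surjective F := by
    rintro ⟨c, hc⟩
    rcases hprodmem c hc with ⟨_, hcW₀⟩ | ⟨_, hcrW₀⟩
    · refine ⟨(⟨c, hcW₀⟩, Multiplicative.ofAdd 0), Subtype.ext ?_⟩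
      show c * r ^ (Multiplicative.toAdd (Multiplicative.ofAdd (0 : ZMod 2))).val = c
      rw [toAdd_ofAdd, ZMod.val_zero, pow_zero, mul_one]
    · refine ⟨(⟨c * r, hcrW₀⟩, Multiplicative.ofAdd 1), Subtype.ext ?_⟩
      show (c * r) * r ^ (Multiplicative.toAdd (Multiplicative.ofAdd (1 : ZMod 2))).val = c
      rw [toAdd_ofAdd, ZMod.val_one, pow_one, mul_assoc, ← pow_two, hr2, mul_one]
  exact ⟨(MulEquiv.ofBijective F ⟨hFinj, hFsurj⟩).symm⟩
end

section
/- Let k be a field, A a commutative ring with 2 = 0, and φ : kˣ → A a map satisfying φ(ab) = φ(a) + φ(b) and φ(a) · φ(-a) = 0 for all a, b ∈ kˣ. Then for all t, u ∈ kˣ, φ(t) · φ(u) · φ(u·t) = 0. -/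
/-- Abstract symbol calculus: under the relations `φ(ab) = φ(a) + φ(b)` and
`φ(a)·φ(-a) = 0` in a commutative ring with `2 = 0`, one has `φ(t)·φ(u)·φ(ut) = 0`. -/
theorem symbol_triple_product_eq_zero
    (k : Type*) [Field k] (A : Type*) [CommRing A] (h2 : (2 : A) = 0)
    (φ : kˣ → A)
    (hmul : ∀ a b : kˣ, φ (a * b) = φ a + φ b)
    (hst : ∀ a : kˣ, φ a * φ (-a) = 0) :
    ∀ t u : kˣ, φ t * φ u * φ (u * t) = 0 := by
  have key : ∀ a : kˣ, φ a * φ a = φ a * φ (-1) := by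
    intro a
    have h := hst a
    rw [show (-a : kˣ) = -1 * a by simp, hmul] at h
    linear_combination h - (φ a * φ (-1)) * h2
  intro t u
  rw [hmul]
  linear_combination φ t * key u + φ u * key t + (φ t * φ u * φ (-1)) * h2
end

section
/- Let k be a field, A a commutative ring with 2 = 0, and φ : kˣ → A satisfying φ(ab) = φ(a) + φ(b), φ(a)·φ(-a) = 0 for all a, b ∈ kˣ, and additionally φ(-1) = 0. Then for all t, u ∈ kˣ and any multiset M of elements of A, and any j, φ(t) · (esymm of the multiset {φ(u), φ(u·t)} + M in degree j) = φ(t) · (esymm of M in degree j), where esymm denotes the j-th elementary symmetric function (the sum of all products of j distinct chosen elements). -/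
lemma esymm_cons_succ {A : Type*} [CommRing A] (a : A) (M : Multiset A) (j : ℕ) :
    Multiset.esymm (a ::ₘ M) (j + 1) = Multiset.esymm M (j + 1) + a * Multiset.esymm M j := by
  simp only [Multiset.esymm, Multiset.powersetCard_cons, Multiset.map_add, Multiset.sum_add,
    Multiset.map_map, Function.comp_def, Multiset.prod_cons]
  rw [← Multiset.sum_map_mul_left]

/-- Under the abstract symbol relations (with moreover `φ(-1) = 0`), for any multiset `M`
over `A` one has `φ(t) · esymm({φ(u), φ(ut)} + M) j = φ(t) · esymm(M) j`, abstracting the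
identity `(t)·w_j(⟨u, ut, rest⟩) = (t)·w_j(⟨rest⟩)` for Stiefel–Whitney classes. -/
theorem symbol_esymm_reduction
    (k : Type*) [Field k] (A : Type*) [CommRing A] (h2 : (2 : A) = 0)
    (φ : kˣ → A)
    (hmul : ∀ a b : kˣ, φ (a * b) = φ a + φ b)
    (hst : ∀ a : kˣ, φ a * φ (-a) = 0)
    (hneg1 : φ (-1) = 0) :
    ∀ (t u : kˣ) (M : Multiset A) (j : ℕ),
      φ t * Multiset.esymm (φ u ::ₘ φ (u * t) ::ₘ M) j = φ t * Multiset.esymm M j := by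
  intro t u M j
  have hsq : ∀ a : kˣ, φ a * φ a = 0 := by
    intro a
    have := hst a
    have hna : φ (-a) = φ a := by
      have : φ (-a) = φ (-1) + φ a := by rw [← hmul, neg_one_mul]
      simp [this, hneg1]
    rwa [hna] at this
  have hut : φ (u * t) = φ u + φ t := hmul u t
  match j with
  | 0 => simp [Multiset.esymm]
  | 1 =>
    rw [esymm_cons_succ, esymm_cons_succ, hut]
    have h0 : ∀ N : Multiset A, Multiset.esymm N 0 = 1 := fun N => by simp [Multiset.esymm]
    rw [h0, h0]
    linear_combination (φ t * φ u) * h2 + hsq t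
  | (n + 2) =>
    rw [esymm_cons_succ, esymm_cons_succ, esymm_cons_succ, hut]
    have h2M : ∀ x : A, 2 * x = 0 := fun x => by rw [h2, zero_mul]
    ring_nf
    rw [show φ t ^ 2 = 0 by rw [sq, hsq], show φ u ^ 2 = 0 by rw [sq, hsq]]
    ring_nf
    linear_combination (φ t * φ u * Multiset.esymm M (1 + n)) * h2
end
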